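/- In the module N_{a_1,a_2} = N(−1,…,−1,a_1,a_2,0,…,0) (with n−1 entries −1, then a_1, a_2 ∈ ℂ∖ℤ, then n−1 entries 0) over sl_{2n}, a basis vector x(b) is annihilated by all positive root vectors X_{α_i} with i ≠ n if and only if b = (−1,…,−1, a_1 + k, a_2 − k, 0,…,0) for some k ∈ ℤ. -/
import Mathlib


open Finsupp

attribute [local instance] Classical.propDecidable

noncomputable section

/-- The ambient vector space with basis indexed by `ℂ^m`. -/
abbrev Wsp (m : ℕ) : Type := (Fin m → ℂ) →₀ ℂ

/-- the `i`-th standard basis vector of `ℂ^m`. -/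
def eps (m : ℕ) (i : Fin m) : Fin m → ℂ := fun j => if j = i then 1 else 0

/-- `z` is a negative integer. -/
def NegInt (z : ℂ) : Prop := ∃ k : ℤ, k < 0 ∧ z = (k : ℂ)

/-- the basis vector `x(b)`. -/
def xv (m : ℕ) (b : Fin m → ℂ) : Wsp m := Finsupp.single b 1

/-- the multiplication operator `q_i`. -/
def qOp (m : ℕ) (i : Fin m) : Wsp m →ₗ[ℂ] Wsp m :=
  Finsupp.lsum ℂ fun b => (if NegInt (b i) then b i + 1 else 1) • Finsupp.lsingle (b + eps m i)

/-- the derivation operator `p_j`. -/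
def pOp (m : ℕ) (j : Fin m) : Wsp m →ₗ[ℂ] Wsp m :=
  Finsupp.lsum ℂ fun b => (if NegInt (b j) then 1 else b j) • Finsupp.lsingle (b - eps m j)

/-- the operator corresponding to the elementary matrix `E_{i,j}`. -/
def Eop (m : ℕ) (i j : Fin m) : Wsp m →ₗ[ℂ] Wsp m := qOp m i ∘ₗ pOp m j

/-- commutator of operators. -/
def oComm {m : ℕ} (f g : Wsp m →ₗ[ℂ] Wsp m) : Wsp m →ₗ[ℂ] Wsp m := f ∘ₗ g - g ∘ₗ f

/-- `z` is a negative (real) number. -/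
def Cneg (z : ℂ) : Prop := z.im = 0 ∧ z.re < 0

/-- the index set `P_a`. -/
def Pa (m : ℕ) (a : Fin m → ℂ) : Set (Fin m → ℂ) :=
  {b | ∀ i, (∃ k : ℤ, b i - a i = (k : ℂ)) ∧ (Cneg (b i) ↔ Cneg (a i))}

end

noncomputable section

/-- the set of admissible indices `b` for the module `N_{a₁,a₂}` over `sl_{2n}`
(`0`-indexed: entries `0,…,n−2` are negative integers congruent to `−1`, entry `n−1`
is in `a₁ + ℤ`, entry `n` is in `a₂ + ℤ`, entries `n+1,…,2n−1` are natural numbers,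
and the coordinate sum equals `a₁ + a₂ − (n−1)`). -/
def adm (n : ℕ) (a1 a2 : ℂ) : Set (Fin (n + n) → ℂ) :=
  {b | (∀ i : Fin (n + n),
      ((i : ℕ) < n - 1 → ∃ k : ℤ, k < 0 ∧ b i = (k : ℂ)) ∧
      ((i : ℕ) = n - 1 → ∃ k : ℤ, b i = a1 + (k : ℂ)) ∧
      ((i : ℕ) = n → ∃ k : ℤ, b i = a2 + (k : ℂ)) ∧
      (n < (i : ℕ) → ∃ k : ℕ, b i = (k : ℂ))) ∧
    ∑ i, b i = a1 + a2 - ((n : ℂ) - 1)}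

/-- the `𝔥_θ`-weight of `x(b)`. -/
def wtTheta (n : ℕ) (b : Fin (n + n) → ℂ) : ℂ :=
  ∑ i : Fin (n + n), (if (i : ℕ) < n then b i else -b i)

/-- the `i`-th component of the `𝔥_n`-weight of `x(b)` (for `0 ≤ i`, `i + 1 < n`). -/
def wtHn (n : ℕ) (b : Fin (n + n) → ℂ) (i : ℕ) (h : i + 1 < n) : ℂ :=
  (b ⟨i, by omega⟩ - b ⟨i + 1, by omega⟩) +
    (b ⟨n + i, by omega⟩ - b ⟨n + i + 1, by omega⟩)

/-- the raising operator `X_i = X_{α_i} + X_{α_{n+i}}` of `𝔟` (for `0 ≤ i`, `i + 1 < n`,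
`0`-indexed). -/
def XopB (n : ℕ) (i : ℕ) (h : i + 1 < n) : Wsp (n + n) →ₗ[ℂ] Wsp (n + n) :=
  Eop (n + n) ⟨i, by omega⟩ ⟨i + 1, by omega⟩ +
    Eop (n + n) ⟨n + i, by omega⟩ ⟨n + i + 1, by omega⟩

/-- the lowering operator `X_{−i} = X_{−α_i} + X_{−α_{n+i}}` of `𝔟` (for `0 ≤ i`,
`i + 1 < n`, `0`-indexed). -/
def XmB (n : ℕ) (i : ℕ) (h : i + 1 < n) : Wsp (n + n) →ₗ[ℂ] Wsp (n + n) :=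
  Eop (n + n) ⟨i + 1, by omega⟩ ⟨i, by omega⟩ +
    Eop (n + n) ⟨n + i + 1, by omega⟩ ⟨n + i, by omega⟩

/-- the operator of `Y = Σ_{i=1}^n E_{i,n+i} ∈ 𝔞`. -/
def Yop (n : ℕ) : Wsp (n + n) →ₗ[ℂ] Wsp (n + n) :=
  ∑ i : Fin n, Eop (n + n) (Fin.castAdd n i) (Fin.natAdd n i)

/-- the operator of `X = Σ_{i=1}^n E_{n+i,i} ∈ 𝔞`. -/
def Xop (n : ℕ) : Wsp (n + n) →ₗ[ℂ] Wsp (n + n) :=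
  ∑ i : Fin n, Eop (n + n) (Fin.natAdd n i) (Fin.castAdd n i)

/-- the operator of `H = Σ_{i=1}^n (E_{i,i} − E_{n+i,n+i}) ∈ 𝔞`. -/
def Hop (n : ℕ) : Wsp (n + n) →ₗ[ℂ] Wsp (n + n) :=
  ∑ i : Fin n,
    (Eop (n + n) (Fin.castAdd n i) (Fin.castAdd n i)
      - Eop (n + n) (Fin.natAdd n i) (Fin.natAdd n i))

/-- `|k| = k_1 + ⋯ + k_{n−1}` (with `k` `1`-indexed). -/
def ksum (n : ℕ) (k : ℕ → ℕ) : ℕ := ∑ j ∈ Finset.range (n - 1), k (j + 1)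

/-- the partial sum `k_1 + ⋯ + k_j`. -/
def psum (k : ℕ → ℕ) (j : ℕ) : ℕ := ∑ t ∈ Finset.range j, k (t + 1)

/-- the coefficient `κ(k)` of proposition 5. -/
def kappa (n : ℕ) (a1 : ℂ) (b : ℤ) (c : ℕ) (k : ℕ → ℕ) : ℂ :=
  (∏ j ∈ Finset.Icc 2 (n - 1), ((psum k j).choose (psum k (j - 1)) : ℂ)) *
    (∏ j ∈ Finset.range (ksum n k), ((c : ℂ) + 1 - ((j : ℂ) + 1))) /
    (((ksum n k).factorial : ℂ) *
      ∏ j ∈ Finset.range (ksum n k), (a1 + (b : ℂ) + ((j : ℂ) + 1)))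

/-- the admissible index of the vector
`x_k(b,c) = x(−1−k_1,…,−1−k_{n−1}, a_1+b+|k|, a_2−b−c+k_1, k_2,…,k_{n−1}, c−|k|)`. -/
def xk (n : ℕ) (a1 a2 : ℂ) (b : ℤ) (c : ℕ) (k : ℕ → ℕ) : Fin (n + n) → ℂ :=
  fun i =>
    if (i : ℕ) < n - 1 then -1 - (k ((i : ℕ) + 1) : ℂ)
    else if (i : ℕ) = n - 1 then a1 + (b : ℂ) + (ksum n k : ℂ)
    else if (i : ℕ) = n then a2 - (b : ℂ) - (c : ℂ) + (k 1 : ℂ)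
    else if (i : ℕ) + 1 < n + n then (k ((i : ℕ) + 2 - n) : ℂ)
    else (c : ℂ) - (ksum n k : ℂ)

/-- turn a tuple `k : Fin (n−1) → Fin (c+1)` into a `1`-indexed sequence `ℕ → ℕ`. -/
def toK (n : ℕ) {c : ℕ} (k : Fin (n - 1) → Fin (c + 1)) : ℕ → ℕ :=
  fun j => if h : 1 ≤ j ∧ j ≤ n - 1 then (k ⟨j - 1, by omega⟩ : ℕ) else 0

/-- the (finite) index set `{k ∈ ℕ^{n−1} : |k| ≤ c}`. -/
def Kset (n c : ℕ) : Finset (Fin (n - 1) → Fin (c + 1)) :=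
  Finset.univ.filter fun k => ∑ i, (k i : ℕ) ≤ c

/-- the canonical `𝔟⁺`-highest weight vector `x(b,c) = Σ_{|k| ≤ c} κ(k) x_k(b,c)`. -/
def hwVec (n : ℕ) (a1 a2 : ℂ) (b : ℤ) (c : ℕ) : Wsp (n + n) :=
  ∑ k ∈ Kset n c, kappa n a1 b c (toK n k) • xv (n + n) (xk n a1 a2 b c (toK n k))

end

lemma pOp_xv (m : ℕ) (j : Fin m) (b : Fin m → ℂ) :
    pOp m j (xv m b) = (if NegInt (b j) then 1 else b j) • xv m (b - eps m j) := by
  rw [pOp, xv, Finsupp.lsum_single, LinearMap.smul_apply, Finsupp.lsingle_apply]; rfl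

lemma qOp_xv (m : ℕ) (i : Fin m) (b : Fin m → ℂ) :
    qOp m i (xv m b) = (if NegInt (b i) then b i + 1 else 1) • xv m (b + eps m i) := by
  rw [qOp, xv, Finsupp.lsum_single, LinearMap.smul_apply, Finsupp.lsingle_apply]; rfl

lemma eop_xv (m : ℕ) (i j : Fin m) (hij : i ≠ j) (b : Fin m → ℂ) :
    Eop m i j (xv m b) =
      ((if NegInt (b j) then 1 else b j) * (if NegInt (b i) then b i + 1 else 1))
        • xv m (b - eps m j + eps m i) := by
  have h1 : (b - eps m j) i = b i := by simp [eps, hij]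
  rw [Eop, LinearMap.comp_apply, pOp_xv, map_smul, qOp_xv, h1, smul_smul]

lemma eop_xv_eq_zero (m : ℕ) (i j : Fin m) (hij : i ≠ j) (b : Fin m → ℂ) :
    Eop m i j (xv m b) = 0 ↔
      ((if NegInt (b j) then 1 else b j) * (if NegInt (b i) then b i + 1 else 1)) = 0 := by
  rw [eop_xv m i j hij b, smul_eq_zero, xv]
  simp [Finsupp.single_eq_zero]

lemma negInt_neg_one : NegInt (-1 : ℂ) := ⟨-1, by norm_num, by norm_num⟩

lemma not_negInt_nat (c : ℕ) : ¬ NegInt ((c : ℕ) : ℂ) := by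
  rintro ⟨k, hk, he⟩
  have : ((c : ℤ) : ℂ) = (k : ℂ) := by push_cast; exact_mod_cast he
  have : (c : ℤ) = k := by exact_mod_cast this
  omega

lemma not_negInt_zero : ¬ NegInt (0 : ℂ) := by
  have := not_negInt_nat 0
  simpa using this

lemma not_negInt_shift (a : ℂ) (ha : ∀ k : ℤ, a ≠ (k : ℂ)) (z : ℂ) (m : ℤ)
    (hz : z = a + (m : ℂ)) : ¬ NegInt z := by
  rintro ⟨k, hk, he⟩
  exact ha (k - m) (by push_cast; linear_combination he - hz)

lemma shift_ne_zero (a : ℂ) (ha : ∀ k : ℤ, a ≠ (k : ℂ)) (m : ℤ) : a + (m : ℂ) ≠ 0 := by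
  intro h
  exact ha (-m) (by push_cast; linear_combination h)

/-- an admissible basis vector `x(b)` of `N_{a₁,a₂}` is annihilated by all
positive root vectors `X_{α_i} = E_{i,i+1}` with `i ≠ n` (`0`-indexed: `i ≠ n−1`)
if and only if `b = (−1,…,−1, a₁+k, a₂−k, 0,…,0)` for some `k ∈ ℤ`. -/
theorem hw_vectors_levi (n : ℕ) (hn : 1 < n) (a1 a2 : ℂ)
    (ha1 : ∀ k : ℤ, a1 ≠ (k : ℂ)) (ha2 : ∀ k : ℤ, a2 ≠ (k : ℂ))
    (b : Fin (n + n) → ℂ) (hb : b ∈ adm n a1 a2) :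
    (∀ i : ℕ, ∀ h : i + 1 < n + n, i ≠ n - 1 →
        Eop (n + n) ⟨i, by omega⟩ ⟨i + 1, by omega⟩ (xv (n + n) b) = 0) ↔
      ∃ k : ℤ, b = fun j : Fin (n + n) =>
        if (j : ℕ) < n - 1 then -1
        else if (j : ℕ) = n - 1 then a1 + (k : ℂ)
        else if (j : ℕ) = n then a2 - (k : ℂ)
        else 0 := by
  obtain ⟨hadm, hsum⟩ := hb
  constructor
  · intro H
    have key : ∀ i : ℕ, ∀ h : i + 1 < n + n, i ≠ n - 1 →
        (if NegInt (b ⟨i + 1, h⟩) then 1 else b ⟨i + 1, h⟩) *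
          (if NegInt (b ⟨i, by omega⟩) then b ⟨i, by omega⟩ + 1 else 1) = 0 := by
      intro i h hi
      have hE := H i h hi
      rwa [eop_xv_eq_zero _ _ _ (Fin.ne_of_val_ne (show i ≠ i + 1 by omega))] at hE
    have hlow : ∀ j : Fin (n + n), (j : ℕ) < n - 1 → b j = -1 := by
      intro j hj
      have h1 : (j : ℕ) + 1 < n + n := by omega
      have hk := key (j : ℕ) h1 (by omega)
      rw [Fin.eta] at hk
      obtain ⟨ki, hki, hbi⟩ := (hadm j).1 hj
      have hni : NegInt (b j) := ⟨ki, hki, hbi⟩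
      rw [if_pos hni] at hk
      have hp : (if NegInt (b ⟨(j : ℕ) + 1, h1⟩) then 1 else b ⟨(j : ℕ) + 1, h1⟩) ≠ 0 := by
        by_cases hc : (j : ℕ) + 1 < n - 1
        · obtain ⟨m, hm, hbm⟩ := (hadm ⟨(j : ℕ) + 1, h1⟩).1 hc
          have hni2 : NegInt (b ⟨(j : ℕ) + 1, h1⟩) := ⟨m, hm, hbm⟩
          rw [if_pos hni2]; exact one_ne_zero
        · have hc2 : (j : ℕ) + 1 = n - 1 := by omega
          obtain ⟨m, hbm⟩ := (hadm ⟨(j : ℕ) + 1, h1⟩).2.1 hc2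
          rw [if_neg (not_negInt_shift a1 ha1 _ m hbm), hbm]
          exact shift_ne_zero a1 ha1 m
      have h2 := (mul_eq_zero.mp hk).resolve_left hp
      linear_combination h2
    have hhigh : ∀ j : Fin (n + n), n < (j : ℕ) → b j = 0 := by
      intro j hj
      have h1 : ((j : ℕ) - 1) + 1 < n + n := by omega
      have hk := key ((j : ℕ) - 1) h1 (by omega)
      have hje : (⟨(j : ℕ) - 1 + 1, h1⟩ : Fin (n + n)) = j := Fin.ext (by simp; omega)
      rw [hje] at hk
      obtain ⟨c, hc⟩ := (hadm j).2.2.2 hj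
      have hnc : ¬ NegInt (b j) := by rw [hc]; exact not_negInt_nat c
      rw [if_neg hnc] at hk
      have hq : ¬ NegInt (b ⟨(j : ℕ) - 1, by omega⟩) := by
        by_cases hcn : (j : ℕ) - 1 = n
        · obtain ⟨m, hm⟩ := (hadm ⟨(j : ℕ) - 1, by omega⟩).2.2.1 hcn
          exact not_negInt_shift a2 ha2 _ m hm
        · obtain ⟨c2, hc2⟩ := (hadm ⟨(j : ℕ) - 1, by omega⟩).2.2.2
            (show n < (j : ℕ) - 1 by omega)
          rw [hc2]; exact not_negInt_nat c2
      rw [if_neg hq, mul_one, hc] at hk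
      rw [hc, hk]
    obtain ⟨k1, hb1⟩ := (hadm ⟨n - 1, by omega⟩).2.1 rfl
    obtain ⟨k2, hb2⟩ := (hadm ⟨n, by omega⟩).2.2.1 rfl
    have hval : ∀ j : Fin (n + n), b j =
        (if (j : ℕ) < n - 1 then (-1 : ℂ) else 0) +
          (if (j : ℕ) = n - 1 then a1 + (k1 : ℂ) else 0) +
          (if (j : ℕ) = n then a2 + (k2 : ℂ) else 0) := by
      intro j
      by_cases h1 : (j : ℕ) < n - 1
      · rw [hlow j h1, if_pos h1, if_neg (by omega), if_neg (by omega)]; ring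
      · by_cases h2 : (j : ℕ) = n - 1
        · rw [show j = ⟨n - 1, by omega⟩ from Fin.ext h2, hb1,
            if_neg (show ¬ (n - 1 < n - 1) by omega), if_pos (rfl : n - 1 = n - 1),
            if_neg (show ¬ (n - 1 = n) by omega)]
          ring
        · by_cases h3 : (j : ℕ) = n
          · rw [show j = ⟨n, by omega⟩ from Fin.ext h3, hb2,
              if_neg (show ¬ (n < n - 1) by omega), if_neg (show ¬ (n = n - 1) by omega),
              if_pos (rfl : n = n)]
            ring
          · rw [hhigh j (by omega), if_neg h1, if_neg h2, if_neg h3]; ring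
    rw [Finset.sum_congr rfl fun j _ => hval j, Finset.sum_add_distrib,
      Finset.sum_add_distrib] at hsum
    have s1 : (∑ j : Fin (n + n), if (j : ℕ) < n - 1 then (-1 : ℂ) else 0)
        = -((n : ℂ) - 1) := by
      rw [Fin.sum_univ_eq_sum_range (fun j => if j < n - 1 then (-1 : ℂ) else 0) (n + n),
        ← Finset.sum_filter,
        show Finset.filter (fun j => j < n - 1) (Finset.range (n + n))
          = Finset.range (n - 1) from by ext x; simp; omega,
        Finset.sum_const, Finset.card_range, nsmul_eq_mul]
      push_cast [Nat.cast_sub (show 1 ≤ n by omega)]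
      ring
    have s2 : (∑ j : Fin (n + n), if (j : ℕ) = n - 1 then a1 + (k1 : ℂ) else 0)
        = a1 + (k1 : ℂ) := by
      rw [Fin.sum_univ_eq_sum_range (fun j => if j = n - 1 then a1 + (k1 : ℂ) else 0) (n + n),
        Finset.sum_ite_eq' (Finset.range (n + n)) (n - 1),
        if_pos (Finset.mem_range.mpr (by omega))]
    have s3 : (∑ j : Fin (n + n), if (j : ℕ) = n then a2 + (k2 : ℂ) else 0)
        = a2 + (k2 : ℂ) := by
      rw [Fin.sum_univ_eq_sum_range (fun j => if j = n then a2 + (k2 : ℂ) else 0) (n + n),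
        Finset.sum_ite_eq' (Finset.range (n + n)) n,
        if_pos (Finset.mem_range.mpr (by omega))]
    rw [s1, s2, s3] at hsum
    have hk0 : (k1 : ℂ) + (k2 : ℂ) = 0 := by linear_combination hsum
    refine ⟨k1, ?_⟩
    funext j
    show b j = if (j : ℕ) < n - 1 then -1
      else if (j : ℕ) = n - 1 then a1 + (k1 : ℂ)
      else if (j : ℕ) = n then a2 - (k1 : ℂ) else 0
    by_cases h1 : (j : ℕ) < n - 1
    · rw [if_pos h1, hlow j h1]
    · by_cases h2 : (j : ℕ) = n - 1
      · rw [if_neg h1, if_pos h2, show j = ⟨n - 1, by omega⟩ from Fin.ext h2, hb1]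
      · by_cases h3 : (j : ℕ) = n
        · rw [if_neg h1, if_neg h2, if_pos h3, show j = ⟨n, by omega⟩ from Fin.ext h3, hb2]
          linear_combination hk0
        · rw [if_neg h1, if_neg h2, if_neg h3, hhigh j (by omega)]
  · rintro ⟨k, rfl⟩ i h1 hi
    rw [eop_xv_eq_zero _ _ _ (Fin.ne_of_val_ne (show i ≠ i + 1 by omega))]
    have hv : ∀ (m : ℕ) (hm : m < n + n),
        (fun j : Fin (n + n) => if (j : ℕ) < n - 1 then (-1 : ℂ)
          else if (j : ℕ) = n - 1 then a1 + (k : ℂ)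
          else if (j : ℕ) = n then a2 - (k : ℂ) else 0) ⟨m, hm⟩ =
        if m < n - 1 then (-1 : ℂ)
          else if m = n - 1 then a1 + (k : ℂ)
          else if m = n then a2 - (k : ℂ) else 0 := fun m hm => rfl
    simp only [Fin.val_mk]
    by_cases hlt : i < n - 1
    · rw [if_pos hlt, if_pos negInt_neg_one]
      ring
    · rw [if_neg (show ¬ (i + 1 < n - 1) by omega), if_neg (show ¬ (i + 1 = n - 1) by omega),
        if_neg (show ¬ (i + 1 = n) by omega), if_neg not_negInt_zero, zero_mul]
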